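/- arXiv:2009.02664 — 4 statements merged into one kernel-verified Lean document; each statement's English description precedes it below -/
import Mathlib

section
/- If H is a block of a connected graph G, then srd(H) ≤ srd(G). -/
open SimpleGraph

/-- `F` is an edge-cut of `G` separating `u` and `v`. -/
def CutsBetween {V : Type*} (G : SimpleGraph V) (u v : V) (F : Finset (Sym2 V)) : Prop :=
  ↑F ⊆ G.edgeSet ∧ ¬ (G.deleteEdges ↑F).Reachable u v

/-- `lam G u v` is the minimum number of edges in an edge-cut of `G` separating `u` and `v`. -/
noncomputable def lam {V : Type*} (G : SimpleGraph V) (u v : V) : ℕ :=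
  sInf {n | ∃ F : Finset (Sym2 V), CutsBetween G u v F ∧ F.card = n}

/-- `c` is a strong rainbow disconnection coloring of `G`: every pair of distinct vertices
admits a rainbow minimum edge-cut separating them. -/
def IsSRDColoring {V : Type*} (G : SimpleGraph V) (c : Sym2 V → ℕ) : Prop :=
  ∀ u v : V, u ≠ v → ∃ F : Finset (Sym2 V),
    CutsBetween G u v F ∧ F.card = lam G u v ∧ Set.InjOn c ↑F

/-- The strong rainbow disconnection number of `G`. -/
noncomputable def srd {V : Type*} (G : SimpleGraph V) : ℕ :=
  sInf {k | ∃ c : Sym2 V → ℕ, (∀ e ∈ G.edgeSet, c e < k) ∧ IsSRDColoring G c}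

/-- `B` is a block of `G`: a maximal connected subgraph without cut-vertices. -/
def IsBlock {V : Type*} (G : SimpleGraph V) (B : G.Subgraph) : Prop :=
  B.verts.Nonempty ∧ B.coe.Connected ∧
  (∀ v : B.verts, (B.coe.induce {w | w ≠ v}).Preconnected) ∧
  ∀ B' : G.Subgraph, B ≤ B' → B'.coe.Connected →
    (∀ v : B'.verts, (B'.coe.induce {w | w ≠ v}).Preconnected) → B = B'

/-- `H` is a cycle graph: connected and 2-regular. -/
def IsCycleGraph {W : Type*} (H : SimpleGraph W) : Prop :=
  H.Connected ∧ ∀ v : W, Nat.card (H.neighborSet v) = 2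


/-!
Every path of `G` joining two vertices `u`, `v` of a block `H` runs inside `H`: adding the
path to `H` keeps it connected and free of cut vertices (after deleting a vertex `w`, each
vertex of the path is still joined to `u` or to `v` by the half of the path avoiding `w`), so
maximality of the block absorbs it.
Consequently a cut of `G` separating two vertices of `H` restricts to one of `H` that is no
larger, and a cut of `H` maps injectively to one of `G`; so the local edge-connectivities
agree, and restricting an optimal strong rainbow disconnection colouring of `G` to the
edges of `H` turns minimum rainbow cuts of `G` into minimum rainbow cuts of `H`.
-/

namespace SimpleGraph

variable {V : Type*} {G : SimpleGraph V}

namespace Walk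

lemma toSubgraph_le_deleteVerts {u v w : V} {p : G.Walk u v} {K : G.Subgraph}
    (hp : p.toSubgraph ≤ K) (hw : w ∉ p.support) : p.toSubgraph ≤ K.deleteVerts {w} := by
  refine ⟨fun x hx => ⟨hp.1 hx, ?_⟩, fun x y hxy => ?_⟩
  · rintro rfl
    exact hw ((mem_verts_toSubgraph p).1 hx)
  · have hx := p.mem_support_of_adj_toSubgraph hxy
    have hy := p.mem_support_of_adj_toSubgraph hxy.symm
    refine Subgraph.deleteVerts_adj.2 ⟨hp.1 ?_, ?_, hp.1 ?_, ?_, hp.2 hxy⟩ <;>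
      grind [mem_verts_toSubgraph]

section

variable [DecidableEq V] {u v x : V} {p : G.Walk u v}

lemma IsPath.eq_of_mem_support_takeUntil_of_mem_support_dropUntil (hp : p.IsPath)
    (hx : x ∈ p.support) {w : V} (h₁ : w ∈ (p.takeUntil x hx).support)
    (h₂ : w ∈ (p.dropUntil x hx).support) : w = x := by
  have hnd := hp.support_nodup
  rw [← p.take_spec hx, support_append] at hnd
  rw [← cons_tail_support, List.mem_cons] at h₂
  exact h₂.resolve_right (List.disjoint_of_nodup_append hnd h₁)

lemma toSubgraph_takeUntil_le (hx : x ∈ p.support) :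
    (p.takeUntil x hx).toSubgraph ≤ p.toSubgraph := by
  conv_rhs => rw [← p.take_spec hx, toSubgraph_append]
  exact le_sup_left

lemma toSubgraph_dropUntil_le (hx : x ∈ p.support) :
    (p.dropUntil x hx).toSubgraph ≤ p.toSubgraph := by
  conv_rhs => rw [← p.take_spec hx, toSubgraph_append]
  exact le_sup_right

end

end Walk

namespace Subgraph

lemma sym2_map_val_injective (H : G.Subgraph) :
    Function.Injective (Sym2.map (Subtype.val : H.verts → V)) :=
  Sym2.map.injective Subtype.val_injective

lemma sym2_map_val_mem_edgeSet {H : G.Subgraph} {e : Sym2 H.verts} (he : e ∈ H.coe.edgeSet) :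
    Sym2.map Subtype.val e ∈ G.edgeSet := by
  induction e using Sym2.ind with
  | _ x y => exact H.adj_sub he

def IsPathClosed (H : G.Subgraph) : Prop :=
  ∀ ⦃u v : V⦄ (p : G.Walk u v), p.IsPath → u ∈ H.verts → v ∈ H.verts → p.toSubgraph ≤ H

lemma preconnected_induce_ne_iff (B : G.Subgraph) (w : B.verts) :
    (B.coe.induce {z | z ≠ w}).Preconnected ↔ (B.deleteVerts {(w : V)}).Preconnected := by
  have hset : @Eq (Set B.verts) {z | z ≠ w} {z | (z : V) ∉ ({(w : V)} : Set V)} := by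
    ext; simp [Subtype.ext_iff]
  rw [Subgraph.preconnected_iff, hset, (B.coeDeleteVertsIso _).preconnected_iff]

lemma preconnected_deleteVerts_of_forall_induce_ne {H : G.Subgraph} (hH : H.Preconnected)
    (hcut : ∀ v : H.verts, (H.coe.induce {w | w ≠ v}).Preconnected) (w : V) :
    (H.deleteVerts {w}).Preconnected := by
  by_cases hw : w ∈ H.verts
  · exact (preconnected_induce_ne_iff H ⟨w, hw⟩).1 (hcut _)
  · rwa [← deleteVerts_inter_verts_left_eq, Set.inter_singleton_eq_empty.2 hw, deleteVerts_empty]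

lemma preconnected_sup_toSubgraph_deleteVerts {H : G.Subgraph}
    (hH : ∀ w : V, (H.deleteVerts {w}).Preconnected) {u v : V} (hu : u ∈ H.verts)
    (hv : v ∈ H.verts) {p : G.Walk u v} (hp : p.IsPath) (w : V) :
    ((H ⊔ p.toSubgraph).deleteVerts {w}).Preconnected := by
  classical
  set D := (H ⊔ p.toSubgraph).deleteVerts {w}
  have hHD : H.deleteVerts {w} ≤ D := deleteVerts_mono le_sup_left
  have hPD {a b : V} (q : G.Walk a b) (hq : q.toSubgraph ≤ p.toSubgraph) (hw : w ∉ q.support) :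
      q.toSubgraph ≤ D :=
    (Walk.toSubgraph_le_deleteVerts hq hw).trans (deleteVerts_mono le_sup_right)
  have hreach : ∀ x ∈ D.verts, ∃ y ∈ (H.deleteVerts {w}).verts, ∃ q : G.Walk x y,
      q.toSubgraph ≤ D := by
    rintro x ⟨hxH | hxP, hxw⟩
    · exact ⟨x, ⟨hxH, hxw⟩, .nil, (singletonSubgraph_le_iff _ _).2 ⟨.inl hxH, hxw⟩⟩
    rw [Walk.mem_verts_toSubgraph] at hxP
    -- `w ≠ x` lies on at most one of the two halves of `p` at `x`
    by_cases hw : w ∈ (p.dropUntil x hxP).support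
    · have hw' : w ∉ (p.takeUntil x hxP).support := fun h =>
        hxw (hp.eq_of_mem_support_takeUntil_of_mem_support_dropUntil hxP h hw).symm
      refine ⟨u, ⟨hu, fun h => hw' (h ▸ Walk.start_mem_support _)⟩,
        (p.takeUntil x hxP).reverse, ?_⟩
      rw [Walk.toSubgraph_reverse]
      exact hPD _ (Walk.toSubgraph_takeUntil_le hxP) hw'
    · exact ⟨v, ⟨hv, fun h => hw (h ▸ Walk.end_mem_support _)⟩, p.dropUntil x hxP,
        hPD _ (Walk.toSubgraph_dropUntil_le hxP) hw⟩
  rw [preconnected_iff_forall_exists_walk_subgraph]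
  intro a b ha hb
  obtain ⟨a', ha', qa, hqa⟩ := hreach a ha
  obtain ⟨b', hb', qb, hqb⟩ := hreach b hb
  obtain ⟨q, hq⟩ := (preconnected_iff_forall_exists_walk_subgraph _).1 (hH w) ha' hb'
  refine ⟨qa.append (q.append qb.reverse), ?_⟩
  simp only [Walk.toSubgraph_append, Walk.toSubgraph_reverse]
  exact sup_le hqa (sup_le (hq.trans hHD) hqb)

open Classical in
noncomputable def restrictCut (H : G.Subgraph) (F : Finset (Sym2 V)) : Finset (Sym2 H.verts) :=
  {e ∈ F.preimage (Sym2.map Subtype.val) H.sym2_map_val_injective.injOn | e ∈ H.coe.edgeSet}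

lemma mem_restrictCut {H : G.Subgraph} {F : Finset (Sym2 V)} {e : Sym2 H.verts} :
    e ∈ H.restrictCut F ↔ Sym2.map Subtype.val e ∈ F ∧ e ∈ H.coe.edgeSet := by
  simp [restrictCut]

lemma card_restrictCut_le (H : G.Subgraph) (F : Finset (Sym2 V)) :
    (H.restrictCut F).card ≤ F.card :=
  Finset.card_le_card_of_injOn _ (fun _ he => (mem_restrictCut.1 he).1)
    H.sym2_map_val_injective.injOn

end Subgraph

end SimpleGraph

section

variable {V : Type*} {G : SimpleGraph V}

theorem IsBlock.isPathClosed {H : G.Subgraph} (hH : IsBlock G H) : H.IsPathClosed := by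
  obtain ⟨-, hconn, hcut, hmax⟩ := hH
  have hdel := Subgraph.preconnected_deleteVerts_of_forall_induce_ne ⟨hconn.preconnected⟩ hcut
  intro u v p hp hu hv
  have hB : (H ⊔ p.toSubgraph).Connected := Subgraph.connected_sup ⟨hconn.preconnected⟩
    p.toSubgraph_connected.preconnected ⟨u, hu, p.start_mem_verts_toSubgraph⟩
  have hHB := hmax _ le_sup_left hB.coe fun w => (Subgraph.preconnected_induce_ne_iff _ w).2
    (Subgraph.preconnected_sup_toSubgraph_deleteVerts hdel hu hv hp w)
  exact le_sup_right.trans hHB.ge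

lemma lam_le_card {u v : V} {F : Finset (Sym2 V)} (hF : CutsBetween G u v F) :
    lam G u v ≤ F.card :=
  Nat.sInf_le ⟨F, hF, rfl⟩

lemma exists_cutsBetween_card_eq_lam [Finite V] {u v : V} (huv : u ≠ v) :
    ∃ F, CutsBetween G u v F ∧ F.card = lam G u v := by
  refine Nat.sInf_mem (s := {n | ∃ F, CutsBetween G u v F ∧ F.card = n})
    ⟨_, (Set.toFinite G.edgeSet).toFinset, ⟨by simp, fun h => huv ?_⟩, rfl⟩
  rwa [Set.Finite.coe_toFinset, deleteEdges_eq_bot.2 subset_rfl, reachable_bot] at h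

lemma isSRDColoring_of_injective [Finite V] {c : Sym2 V → ℕ} (hc : Function.Injective c) :
    IsSRDColoring G c := fun _ _ huv =>
  (exists_cutsBetween_card_eq_lam huv).imp fun _ hF => ⟨hF.1, hF.2, hc.injOn⟩

lemma exists_isSRDColoring_lt_srd [Finite V] (G : SimpleGraph V) :
    ∃ c : Sym2 V → ℕ, (∀ e ∈ G.edgeSet, c e < srd G) ∧ IsSRDColoring G c :=
  Nat.sInf_mem (s := {k | ∃ c : Sym2 V → ℕ, (∀ e ∈ G.edgeSet, c e < k) ∧ IsSRDColoring G c})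
    ⟨_, fun e => Finite.equivFin (Sym2 V) e, fun e _ => (Finite.equivFin _ e).is_lt,
    isSRDColoring_of_injective (Fin.val_injective.comp (Finite.equivFin _).injective)⟩

lemma CutsBetween.restrictCut {H : G.Subgraph} {u v : H.verts}
    {F : Finset (Sym2 V)} (hF : CutsBetween G u v F) :
    CutsBetween H.coe u v (H.restrictCut F) := by
  refine ⟨fun e he => (Subgraph.mem_restrictCut.1 he).2, fun h => hF.2 (h.map ⟨Subtype.val, ?_⟩)⟩
  intro x y hxy
  rw [deleteEdges_adj] at hxy ⊢
  exact ⟨H.adj_sub hxy.1, fun hmem => hxy.2 (Subgraph.mem_restrictCut.2 ⟨hmem, hxy.1⟩)⟩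

lemma CutsBetween.image_val [DecidableEq V] {H : G.Subgraph}
    (hH : H.IsPathClosed) {u v : H.verts} {F : Finset (Sym2 H.verts)}
    (hF : CutsBetween H.coe u v F) :
    CutsBetween G u v (F.image (Sym2.map Subtype.val)) := by
  refine ⟨?_, ?_⟩
  · simp only [Finset.coe_image, Set.image_subset_iff]
    exact fun e he => Subgraph.sym2_map_val_mem_edgeSet (hF.1 he)
  · rintro ⟨q⟩
    have hle : G.deleteEdges ↑(F.image (Sym2.map Subtype.val)) ≤ G := deleteEdges_le _
    let p : G.Walk u v := q.toPath.1.mapLe hle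
    have hpH : p.toSubgraph ≤ H := hH p ((Walk.isPath_mapLe hle).2 q.toPath.2) u.2 v.2
    have hpF : p.toSubgraph ≤ H.deleteEdges ↑(F.image (Sym2.map Subtype.val)) := by
      refine ⟨hpH.1, fun x y hxy => (Subgraph.deleteEdges_adj _ _ _).2 ⟨hpH.2 hxy, ?_⟩⟩
      rw [Walk.adj_toSubgraph_iff_mem_edges, Walk.edges_mapLe_eq_edges] at hxy
      have hq := q.edges_subset_edgeSet (q.edges_toPath_subset_edges hxy)
      rw [edgeSet_deleteEdges] at hq
      exact hq.2
    apply hF.2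
    rw [Subgraph.deleteEdges_coe_eq, ← Finset.coe_image]
    exact (p.toSubgraph_connected ⟨u, p.start_mem_verts_toSubgraph⟩
      ⟨v, p.end_mem_verts_toSubgraph⟩).map (Subgraph.inclusion hpF)

lemma lam_coe_eq_of_isPathClosed [Finite V] {H : G.Subgraph}
    (hH : H.IsPathClosed) {u v : H.verts} (huv : u ≠ v) : lam H.coe u v = lam G u v := by
  classical
  apply le_antisymm
  · obtain ⟨F, hF, hcard⟩ := exists_cutsBetween_card_eq_lam (G := G) (Subtype.coe_ne_coe.2 huv)
    exact (lam_le_card hF.restrictCut).trans (hcard ▸ H.card_restrictCut_le F)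
  · obtain ⟨F, hF, hcard⟩ := exists_cutsBetween_card_eq_lam huv
    calc lam G u v ≤ (F.image (Sym2.map Subtype.val)).card := lam_le_card (hF.image_val hH)
      _ = lam H.coe u v := by rw [Finset.card_image_of_injective _ H.sym2_map_val_injective, hcard]

theorem srd_coe_le_srd_of_isPathClosed [Finite V]
    {H : G.Subgraph} (hH : H.IsPathClosed) : srd H.coe ≤ srd G := by
  obtain ⟨c, hc_lt, hc⟩ := exists_isSRDColoring_lt_srd G
  refine Nat.sInf_le ⟨c ∘ Sym2.map Subtype.val,
    fun e he => hc_lt _ (Subgraph.sym2_map_val_mem_edgeSet he), fun u v huv => ?_⟩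
  obtain ⟨F, hF, hcard, hinj⟩ := hc u v (Subtype.coe_ne_coe.2 huv)
  refine ⟨H.restrictCut F, hF.restrictCut, le_antisymm ?_ (lam_le_card hF.restrictCut),
    hinj.comp H.sym2_map_val_injective.injOn fun _ he => (Subgraph.mem_restrictCut.1 he).1⟩
  rw [lam_coe_eq_of_isPathClosed hH huv, ← hcard]
  exact H.card_restrictCut_le F

end

theorem stmt5_general {V : Type*} [Fintype V] (G : SimpleGraph V)
    (H : G.Subgraph) (hH : IsBlock G H) :
    srd H.coe ≤ srd G :=
  srd_coe_le_srd_of_isPathClosed hH.isPathClosed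

theorem stmt5 {V : Type*} [Fintype V] (G : SimpleGraph V) (hV : Nontrivial V)
    (hG : G.Connected) (H : G.Subgraph) (hH : IsBlock G H)
    (hHe : H.edgeSet.Nonempty) :
    srd H.coe ≤ srd G :=
  stmt5_general G H hH
end

section
/- For every integer n ≥ 2, the complete graph K_n satisfies srd(K_n) = n − 1. -/
open SimpleGraph

section Aux

variable {n : ℕ}

lemma isolated_not_reachable {V : Type*} {G : SimpleGraph V} {u v : V}
    (hu : ∀ w, ¬ G.Adj u w) (huv : u ≠ v) : ¬ G.Reachable u v := by
  rintro ⟨p⟩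
  cases p with
  | nil => exact huv rfl
  | cons h _ => exact hu _ h

/-- The star at `u`: all edges of `K_n` incident to `u`. -/
def starCut (n : ℕ) (u : Fin n) : Finset (Sym2 (Fin n)) :=
  (Finset.univ.erase u).image (fun j => s(u, j))

lemma mem_starCut {u : Fin n} {e : Sym2 (Fin n)} :
    e ∈ starCut n u ↔ ∃ j, j ≠ u ∧ e = s(u, j) := by
  simp [starCut, eq_comm]

lemma starCut_card (u : Fin n) : (starCut n u).card = n - 1 := by
  rw [starCut, Finset.card_image_of_injOn, Finset.card_erase_of_mem (Finset.mem_univ u),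
    Finset.card_univ, Fintype.card_fin]
  intro a ha b hb hab
  rw [Sym2.eq_iff] at hab
  rcases hab with ⟨-, h⟩ | ⟨h1, h2⟩
  · exact h
  · exact absurd h1.symm (Finset.ne_of_mem_erase hb)

lemma starCut_subset (u : Fin n) :
    ↑(starCut n u) ⊆ (⊤ : SimpleGraph (Fin n)).edgeSet := by
  intro e he
  rw [Finset.mem_coe, mem_starCut] at he
  obtain ⟨j, hj, rfl⟩ := he
  rw [SimpleGraph.mem_edgeSet, top_adj]
  exact hj.symm

lemma starCut_isolated (u : Fin n) (w : Fin n) :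
    ¬ ((⊤ : SimpleGraph (Fin n)).deleteEdges ↑(starCut n u)).Adj u w := by
  rw [deleteEdges_adj]
  rintro ⟨hadj, hnot⟩
  exact hnot (Finset.mem_coe.mpr (mem_starCut.mpr ⟨w, hadj.ne', rfl⟩))

lemma starCut_cuts_left {u v : Fin n} (huv : u ≠ v) :
    CutsBetween (⊤ : SimpleGraph (Fin n)) u v (starCut n u) :=
  ⟨starCut_subset u, isolated_not_reachable (starCut_isolated u) huv⟩

lemma starCut_cuts_right {u v : Fin n} (huv : u ≠ v) :
    CutsBetween (⊤ : SimpleGraph (Fin n)) u v (starCut n v) :=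
  ⟨starCut_subset v, fun h =>
    isolated_not_reachable (starCut_isolated v) huv.symm h.symm⟩

lemma cut_card_lb {u v : Fin n} (huv : u ≠ v)
    {F : Finset (Sym2 (Fin n))} (hF : CutsBetween ⊤ u v F) : n - 1 ≤ F.card := by
  classical
  obtain ⟨hsub, hreach⟩ := hF
  have key : ∀ w : Fin n, w ≠ u → s(u, w) ∈ F ∨ s(w, v) ∈ F := by
    intro w hw
    by_contra h
    push_neg at h
    obtain ⟨h1, h2⟩ := h
    apply hreach
    by_cases hwv : w = v
    · subst hwv
      exact Adj.reachable (by rw [deleteEdges_adj, top_adj]; exact ⟨huv, h1⟩)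
    · have r1 : ((⊤ : SimpleGraph (Fin n)).deleteEdges ↑F).Adj u w := by
        rw [deleteEdges_adj, top_adj]; exact ⟨hw.symm, h1⟩
      have r2 : ((⊤ : SimpleGraph (Fin n)).deleteEdges ↑F).Adj w v := by
        rw [deleteEdges_adj, top_adj]; exact ⟨hwv, h2⟩
      exact r1.reachable.trans r2.reachable
  have hcard := Finset.card_le_card_of_injOn
    (fun w => if s(u, w) ∈ F then s(u, w) else s(w, v)) (s := Finset.univ.erase u) (t := F)
    (by
      intro a ha
      have ha' : a ≠ u := Finset.ne_of_mem_erase ha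
      by_cases h : s(u, a) ∈ F
      · simpa [h] using h
      · have := (key a ha').resolve_left h
        simpa [h] using this)
    (by
      intro a ha b hb hab
      have ha' : a ≠ u := Finset.ne_of_mem_erase ha
      have hb' : b ≠ u := Finset.ne_of_mem_erase hb
      dsimp at hab
      split_ifs at hab with h1 h2 h2 <;> rw [Sym2.eq_iff] at hab
      · rcases hab with ⟨-, h⟩ | ⟨hx, hy⟩
        · exact h
        · exact absurd hx.symm hb'
      · rcases hab with ⟨hx, hy⟩ | ⟨hx, hy⟩
        · exact absurd hx.symm hb'
        · exact absurd hx huv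
      · rcases hab with ⟨hx, hy⟩ | ⟨hx, hy⟩
        · exact absurd hx ha'
        · exact absurd hy.symm huv
      · rcases hab with ⟨h, -⟩ | ⟨hx, hy⟩
        · exact h
        · rw [hx, ← hy]
    )
  rwa [Finset.card_erase_of_mem (Finset.mem_univ u), Finset.card_univ, Fintype.card_fin] at hcard

lemma lam_top (hn : 2 ≤ n) {u v : Fin n} (huv : u ≠ v) :
    lam (⊤ : SimpleGraph (Fin n)) u v = n - 1 := by
  have hmem : (n - 1) ∈ {k | ∃ F : Finset (Sym2 (Fin n)),
      CutsBetween ⊤ u v F ∧ F.card = k} :=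
    ⟨starCut n u, starCut_cuts_left huv, starCut_card u⟩
  refine le_antisymm (Nat.sInf_le hmem) (le_csInf ⟨_, hmem⟩ ?_)
  rintro k ⟨F, hF, rfl⟩
  exact cut_card_lb huv hF

/-- The coloring of `K_n` with `n-1` colors. -/
def col (n : ℕ) : Sym2 (Fin n) → ℕ :=
  Sym2.lift ⟨fun i j =>
    if i.val = n - 1 then (2 * j.val) % (n - 1)
    else if j.val = n - 1 then (2 * i.val) % (n - 1)
    else (i.val + j.val) % (n - 1), by
      intro i j
      dsimp only
      by_cases h1 : i.val = n - 1 <;> by_cases h2 : j.val = n - 1 <;>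
        simp [h1, h2, Nat.add_comm]⟩

lemma col_mk (i j : Fin n) : col n s(i, j) =
    if i.val = n - 1 then (2 * j.val) % (n - 1)
    else if j.val = n - 1 then (2 * i.val) % (n - 1)
    else (i.val + j.val) % (n - 1) := rfl

lemma col_lt (hn : 2 ≤ n) (e : Sym2 (Fin n)) : col n e < n - 1 := by
  have hm : 0 < n - 1 := by omega
  induction e using Sym2.ind with
  | _ i j => rw [col_mk]; split_ifs <;> exact Nat.mod_lt _ hm

lemma add_mod_cancel_aux {m c x y : ℕ} (hx : x < m) (hy : y < m)
    (h : (c + x) % m = (c + y) % m) : x = y := by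
  have h2 := Nat.ModEq.add_left_cancel' c h
  rwa [Nat.ModEq, Nat.mod_eq_of_lt hx, Nat.mod_eq_of_lt hy] at h2

lemma col_injOn {u : Fin n} (hu : u.val ≠ n - 1) :
    Set.InjOn (col n) ↑(starCut n u) := by
  have hum : u.val < n - 1 := by omega
  intro e he f hf hef
  rw [Finset.mem_coe, mem_starCut] at he hf
  obtain ⟨a, ha, rfl⟩ := he
  obtain ⟨b, hb, rfl⟩ := hf
  rw [col_mk, col_mk, if_neg hu, if_neg hu] at hef
  have ham : a.val = n - 1 ∨ a.val < n - 1 := by omega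
  have hbm : b.val = n - 1 ∨ b.val < n - 1 := by omega
  suffices hab : a = b by rw [hab]
  rcases ham with ham | ham <;> rcases hbm with hbm | hbm
  · exact Fin.ext (ham.trans hbm.symm)
  · rw [if_pos ham, if_neg (by omega)] at hef
    rw [two_mul] at hef
    exact absurd (Fin.ext (add_mod_cancel_aux hum hbm hef) : u = b).symm hb
  · rw [if_neg (by omega), if_pos hbm] at hef
    rw [two_mul] at hef
    exact absurd (Fin.ext (add_mod_cancel_aux ham hum hef) : a = u) ha
  · rw [if_neg (by omega), if_neg (by omega)] at hef
    exact Fin.ext (add_mod_cancel_aux ham hbm hef)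

end Aux

theorem stmt7 (n : ℕ) (hn : 2 ≤ n) :
    srd (⊤ : SimpleGraph (Fin n)) = n - 1 := by
  have hmem : (n - 1) ∈ {k | ∃ c : Sym2 (Fin n) → ℕ,
      (∀ e ∈ (⊤ : SimpleGraph (Fin n)).edgeSet, c e < k) ∧ IsSRDColoring ⊤ c} := by
    refine ⟨col n, fun e _ => col_lt hn e, ?_⟩
    intro u v huv
    by_cases hu : u.val ≠ n - 1
    · exact ⟨starCut n u, starCut_cuts_left huv,
        by rw [starCut_card, lam_top hn huv], col_injOn hu⟩
    · push_neg at hu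
      have hv : v.val ≠ n - 1 := fun h => huv (Fin.ext (hu.trans h.symm))
      exact ⟨starCut n v, starCut_cuts_right huv,
        by rw [starCut_card, lam_top hn huv], col_injOn hv⟩
  refine le_antisymm (Nat.sInf_le hmem) (le_csInf ⟨_, hmem⟩ ?_)
  rintro k ⟨c, hc, hsrd⟩
  have h01 : (⟨0, by omega⟩ : Fin n) ≠ ⟨1, by omega⟩ := by simp [Fin.ext_iff]
  obtain ⟨F, hF, hcard, hinj⟩ := hsrd _ _ h01
  rw [lam_top hn h01] at hcard
  have hle : F.card ≤ (Finset.range k).card := by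
    refine Finset.card_le_card_of_injOn c ?_ ?_
    · intro e he
      exact Finset.mem_range.mpr (hc e (hF.1 (Finset.mem_coe.mpr he)))
    · intro a ha b hb hab
      exact hinj (Finset.mem_coe.mpr ha) (Finset.mem_coe.mpr hb) hab
  rw [hcard, Finset.card_range] at hle
  exact hle
end

section
/- If G is a k-edge-connected k-regular graph, then k ≤ srd(G) ≤ χ'(G), where χ'(G) is the chromatic index of G. -/
open SimpleGraph

/-- A proper edge-coloring: edges sharing a vertex get different colors. -/
def ProperEdgeColoring {V : Type*} (G : SimpleGraph V) (c : Sym2 V → ℕ) : Prop :=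
  ∀ e ∈ G.edgeSet, ∀ f ∈ G.edgeSet, e ≠ f → (∃ x, x ∈ e ∧ x ∈ f) → c e ≠ c f

/-- The chromatic index of `G`. -/
noncomputable def chromIndex {V : Type*} (G : SimpleGraph V) : ℕ :=
  sInf {m | ∃ c : Sym2 V → ℕ, (∀ e ∈ G.edgeSet, c e < m) ∧ ProperEdgeColoring G c}

/-- `G` is `k`-edge-connected: every edge-cut has at least `k` edges. -/
def IsKEdgeConnected {V : Type*} (G : SimpleGraph V) (k : ℕ) : Prop :=
  ∀ F : Finset (Sym2 V), ↑F ⊆ G.edgeSet → ¬ (G.deleteEdges ↑F).Connected → k ≤ F.card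

section Aux
open SimpleGraph

variable {V : Type*} [Fintype V] (G : SimpleGraph V) [DecidableRel G.Adj]

lemma star_cuts [DecidableEq V] {u v : V} (huv : u ≠ v) :
    CutsBetween G u v (G.incidenceFinset u) := by
  constructor
  · intro e he
    rw [Finset.mem_coe, mem_incidenceFinset] at he
    exact he.1
  · intro hr
    obtain ⟨w⟩ := hr
    cases w with
    | nil => exact huv rfl
    | cons h _ =>
      rw [deleteEdges_adj] at h
      exact h.2 (by rw [Finset.mem_coe, mem_incidenceFinset]; exact ⟨h.1, Sym2.mem_mk_left _ _⟩)

lemma lam_eq [DecidableEq V] (k : ℕ) (hreg : ∀ v : V, G.degree v = k)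
    (hconn : IsKEdgeConnected G k) {u v : V} (huv : u ≠ v) : lam G u v = k := by
  have hmem : k ∈ {n | ∃ F : Finset (Sym2 V), CutsBetween G u v F ∧ F.card = n} :=
    ⟨G.incidenceFinset u, star_cuts G huv, by rw [card_incidenceFinset_eq_degree]; exact hreg u⟩
  refine le_antisymm (Nat.sInf_le hmem) ?_
  refine le_csInf ⟨k, hmem⟩ ?_
  rintro n ⟨F, ⟨hF, hnr⟩, rfl⟩
  refine hconn F hF fun hc => hnr (hc.preconnected u v)

lemma proper_is_srd [DecidableEq V] (k : ℕ) (hreg : ∀ v : V, G.degree v = k)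
    (hconn : IsKEdgeConnected G k) {c : Sym2 V → ℕ} (hc : ProperEdgeColoring G c) :
    IsSRDColoring G c := by
  intro u v huv
  refine ⟨G.incidenceFinset u, star_cuts G huv, ?_, ?_⟩
  · rw [card_incidenceFinset_eq_degree, hreg u, lam_eq G k hreg hconn huv]
  · intro e he f hf hef
    rw [Finset.mem_coe, mem_incidenceFinset] at he hf
    by_contra hne
    exact hc e he.1 f hf.1 hne ⟨u, he.2, hf.2⟩ hef

end Aux

theorem stmt9 {V : Type*} [Fintype V] (G : SimpleGraph V) [DecidableRel G.Adj]
    (k : ℕ) (hG : G.Connected) (hreg : ∀ v : V, G.degree v = k)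
    (hconn : IsKEdgeConnected G k) :
    k ≤ srd G ∧ srd G ≤ chromIndex G := by
  classical
  -- a proper edge coloring exists (color edges injectively)
  set c0 : Sym2 V → ℕ := fun e => (Fintype.equivFin (Sym2 V) e : ℕ) with hc0
  have hc0inj : Function.Injective c0 := fun a b h => by
    simpa using (Fintype.equivFin (Sym2 V)).injective (Fin.val_injective h)
  have hc0prop : ProperEdgeColoring G c0 := fun e _ f _ hef _ h => hef (hc0inj h)
  have hc0lt : ∀ e ∈ G.edgeSet, c0 e < Fintype.card (Sym2 V) := fun e _ =>
    (Fintype.equivFin (Sym2 V) e).isLt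
  have hchrom : Fintype.card (Sym2 V) ∈
      {m | ∃ c : Sym2 V → ℕ, (∀ e ∈ G.edgeSet, c e < m) ∧ ProperEdgeColoring G c} :=
    ⟨c0, hc0lt, hc0prop⟩
  have hchromMem := Nat.sInf_mem ⟨_, hchrom⟩
  obtain ⟨c1, hc1lt, hc1prop⟩ := hchromMem
  have hsrdmem : chromIndex G ∈
      {m | ∃ c : Sym2 V → ℕ, (∀ e ∈ G.edgeSet, c e < m) ∧ IsSRDColoring G c} :=
    ⟨c1, hc1lt, proper_is_srd G k hreg hconn hc1prop⟩
  constructor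
  · -- k ≤ srd G
    refine le_csInf ⟨_, hsrdmem⟩ ?_
    rintro m ⟨c, hlt, hsrd⟩
    by_cases hex : ∃ u v : V, u ≠ v
    · obtain ⟨u, v, huv⟩ := hex
      obtain ⟨F, ⟨hFE, _⟩, hcard, hinj⟩ := hsrd u v huv
      have hk : F.card = k := by rw [hcard, lam_eq G k hreg hconn huv]
      calc k = F.card := hk.symm
        _ = (F.image c).card := (Finset.card_image_of_injOn hinj).symm
        _ ≤ (Finset.range m).card := Finset.card_le_card (by
            intro x hx
            obtain ⟨e, he, rfl⟩ := Finset.mem_image.mp hx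
            exact Finset.mem_range.mpr (hlt e (hFE he)))
        _ = m := Finset.card_range m
    · push_neg at hex
      obtain ⟨v⟩ := hG.nonempty
      have : G.degree v = 0 := by
        rw [← card_neighborFinset_eq_degree]
        refine Finset.card_eq_zero.mpr (Finset.eq_empty_of_forall_notMem fun w hw => ?_)
        rw [SimpleGraph.mem_neighborFinset] at hw
        exact hw.ne (hex v w)
      rw [← hreg v, this]
      exact Nat.zero_le _
  · exact Nat.sInf_le hsrdmem
end

section
/- For every two distinct vertices u and v in a graph G, the minimum number of edges in an edge-cut separating u and v equals the maximum number of pairwise edge-disjoint u-v-paths in G. -/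
open SimpleGraph

/-! Ford–Fulkerson with unit capacities. Edge-disjoint `u`-`v` paths meet every cut in distinct
edges, so there are at most `lam G u v` of them. Conversely, an integral unit flow of maximum
value has no augmenting path, so the vertices reachable from `u` in its residual graph span a
cut all of whose edges are saturated; this cut has as many edges as the flow has value.
Peeling off one saturated `u`-`v` path at a time decomposes the flow into that many
edge-disjoint paths. -/

open Finset

namespace SimpleGraph

variable {V : Type*} {G : SimpleGraph V}

theorem exists_isPath_of_reflTransGen {r : V → V → Prop} (hr : ∀ x y, r x y → G.Adj x y)
    {a b : V} (h : Relation.ReflTransGen r a b) :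
    ∃ p : G.Walk a b, p.IsPath ∧ ∀ d ∈ p.darts, r d.fst d.snd := by
  classical
  suffices ∃ p : G.Walk a b, ∀ d ∈ p.darts, r d.fst d.snd by
    obtain ⟨p, hp⟩ := this
    exact ⟨p.bypass, p.bypass_isPath, fun d hd => hp d (p.darts_bypass_subset_darts hd)⟩
  induction h using Relation.ReflTransGen.head_induction_on with
  | refl => exact ⟨Walk.nil, by simp⟩
  | head hac _ ih =>
    obtain ⟨q, hq⟩ := ih
    exact ⟨Walk.cons (hr _ _ hac) q, by simpa [hac] using hq⟩

theorem Walk.mk_mem_edges_iff {a b x y : V} (p : G.Walk a b) :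
    s(x, y) ∈ p.edges ↔
      (x, y) ∈ p.darts.map Dart.toProd ∨ (y, x) ∈ p.darts.map Dart.toProd := by
  simp only [Walk.edges, List.mem_map, dart_edge_eq_mk'_iff]
  grind

theorem card_le_card_of_edgeDisjoint {u v : V} {n : ℕ} (P : Fin n → G.Path u v)
    (hP : ∀ i j, i ≠ j → ∀ e ∈ (P i).1.edges, e ∉ (P j).1.edges) {F : Finset (Sym2 V)}
    (hF : ¬ (G.deleteEdges ↑F).Reachable u v) : n ≤ F.card := by
  have hmeet : ∀ i, ∃ e ∈ (P i).1.edges, e ∈ F := by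
    intro i
    by_contra! hi
    exact hF ⟨(P i).1.toDeleteEdges F hi⟩
  choose e he heF using hmeet
  simpa using card_le_card_of_injOn e (s := univ) (fun i _ => heF i)
    fun i _ j _ hij => by_contra fun hne => hP i j hne _ (he i) (hij ▸ he j)

theorem Walk.rel_of_mem_map_toProd {r : V → V → Prop} {a b x y : V} {p : G.Walk a b}
    (h : ∀ d ∈ p.darts, r d.fst d.snd) (hxy : (x, y) ∈ p.darts.map Dart.toProd) : r x y := by
  obtain ⟨⟨⟨x', y'⟩, _⟩, hd, ⟨⟩⟩ := List.mem_map.mp hxy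
  exact h _ hd

section UnitFlow

variable [DecidableEq V]

def Walk.unitFlow : {a b : V} → G.Walk a b → V → V → ℤ
  | _, _, nil => 0
  | a, _, cons (v := c) _ p => fun x y =>
      (if x = a ∧ y = c then 1 else 0) - (if x = c ∧ y = a then 1 else 0) + p.unitFlow x y

theorem Walk.unitFlow_swap {a b : V} (p : G.Walk a b) (x y : V) :
    p.unitFlow y x = -p.unitFlow x y := by
  induction p with
  | nil => simp [unitFlow]
  | cons _ p ih =>
    simp only [unitFlow, ih]
    split_ifs <;> grind

theorem Walk.sum_unitFlow [Fintype V] {a b : V} (p : G.Walk a b) (w : V) :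
    ∑ y, p.unitFlow w y = (if w = a then 1 else 0) - if w = b then 1 else 0 := by
  induction p with
  | nil => simp [unitFlow]
  | cons _ p ih =>
    simp only [unitFlow, sum_add_distrib, sum_sub_distrib, ih]
    simp [ite_and]

theorem Walk.IsPath.unitFlow_eq {a b : V} {p : G.Walk a b} (hp : p.IsPath) (x y : V) :
    p.unitFlow x y = if (x, y) ∈ p.darts.map Dart.toProd then 1
      else if (y, x) ∈ p.darts.map Dart.toProd then -1 else 0 := by
  induction p with
  | nil => simp [Walk.unitFlow]
  | @cons a c b h p ih =>
    rw [Walk.cons_isPath_iff] at hp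
    have hfst : ∀ z, (a, z) ∉ p.darts.map Dart.toProd := fun z hz =>
      hp.2 (Walk.rel_of_mem_map_toProd (r := fun x _ => x ∈ p.support)
        (fun _ => p.dart_fst_mem_support_of_mem_darts) hz)
    have hsnd : ∀ z, (z, a) ∉ p.darts.map Dart.toProd := fun z hz =>
      hp.2 (Walk.rel_of_mem_map_toProd (r := fun _ y => y ∈ p.support)
        (fun _ => p.dart_snd_mem_support_of_mem_darts) hz)
    have hac : a ≠ c := h.ne
    simp only [Walk.unitFlow, Walk.darts_cons, List.map_cons, List.mem_cons, ih hp.1]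
    grind

theorem Walk.IsPath.unitFlow_ne_zero_iff {a b : V} {p : G.Walk a b} (hp : p.IsPath) {x y : V} :
    p.unitFlow x y ≠ 0 ↔ s(x, y) ∈ p.edges := by
  rw [hp.unitFlow_eq, p.mk_mem_edges_iff]
  split_ifs <;> simp_all

end UnitFlow

/-- Skew-symmetric convention: `f x y = 1` means that one unit travels from `x` to `y`, and
then `f y x = -1`. The value of the flow is `∑ y, f s y`. -/
structure IsUnitFlow [Fintype V] (G : SimpleGraph V) (s t : V) (f : V → V → ℤ) : Prop where
  swap : ∀ x y, f y x = -f x y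
  le_one : ∀ x y, f x y ≤ 1
  adj : ∀ x y, f x y ≠ 0 → G.Adj x y
  conserve : ∀ w, w ≠ s → w ≠ t → ∑ y, f w y = 0

section Flow

variable [Fintype V] {s t : V} {f : V → V → ℤ}

theorem isUnitFlow_zero : IsUnitFlow G s t 0 :=
  ⟨by simp, by simp, by simp, by simp⟩

theorem IsUnitFlow.sum_le_card (hf : IsUnitFlow G s t f) : ∑ y, f s y ≤ Fintype.card V := by
  calc ∑ y, f s y ≤ ∑ _y : V, (1 : ℤ) := sum_le_sum fun y _ => hf.le_one s y
    _ = Fintype.card V := by simp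

theorem exists_isUnitFlow_forall_le (G : SimpleGraph V) (s t : V) :
    ∃ f, IsUnitFlow G s t f ∧ ∀ g, IsUnitFlow G s t g → ∑ y, g s y ≤ ∑ y, f s y := by
  set N := {n : ℕ | ∃ f, IsUnitFlow G s t f ∧ ∑ y, f s y = n}
  have hbdd : BddAbove N := ⟨Fintype.card V, fun n ⟨f, hf, hn⟩ => by
    have := hf.sum_le_card
    omega⟩
  obtain ⟨f, hf, hfN⟩ := Nat.sSup_mem (⟨0, 0, isUnitFlow_zero, by simp⟩ : N.Nonempty) hbdd
  refine ⟨f, hf, fun g hg => ?_⟩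
  rcases lt_or_ge (∑ y, g s y) 0 with hneg | hnn
  · omega
  · have hgN : (∑ y, g s y).toNat ∈ N := ⟨g, hg, (Int.toNat_of_nonneg hnn).symm⟩
    have := le_csSup hbdd hgN
    omega

variable [DecidableEq V]

namespace IsUnitFlow

theorem sum_eq_sum_compl (hf : IsUnitFlow G s t f) {S : Finset V} (hs : s ∈ S) (ht : t ∉ S) :
    ∑ y, f s y = ∑ x ∈ S, ∑ y ∈ Sᶜ, f x y := by
  have hconserve : ∑ x ∈ S, ∑ y, f x y = ∑ y, f s y :=
    sum_eq_single_of_mem s hs fun w hw hws => hf.conserve w hws (ne_of_mem_of_not_mem hw ht)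
  have hinner : ∑ x ∈ S, ∑ y ∈ S, f x y = 0 := by
    have hanti : ∑ x ∈ S, ∑ y ∈ S, f x y = ∑ x ∈ S, ∑ y ∈ S, -f x y := by
      rw [sum_comm]
      exact sum_congr rfl fun x _ => sum_congr rfl fun y _ => hf.swap x y
    simp only [sum_neg_distrib] at hanti
    linarith
  rw [← hconserve, ← sub_eq_zero, ← sum_sub_distrib, ← hinner]
  refine sum_congr rfl fun x _ => ?_
  rw [← sum_add_sum_compl S (f x)]
  ring

theorem add_unitFlow (hf : IsUnitFlow G s t f) {p : G.Walk s t} (hp : p.IsPath)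
    (hres : ∀ d ∈ p.darts, f d.fst d.snd ≤ 0) : IsUnitFlow G s t (f + p.unitFlow) := by
  refine ⟨fun x y => ?_, fun x y => ?_, fun x y hxy => ?_, fun w hws hwt => ?_⟩
  · simp [hf.swap x y, p.unitFlow_swap x y]; ring
  · have := hf.swap x y
    have := hf.le_one x y
    have := hf.le_one y x
    simp only [Pi.add_apply, hp.unitFlow_eq]
    split_ifs with h1 h2
    · have := Walk.rel_of_mem_map_toProd (r := fun x y => f x y ≤ 0) hres h1; omega
    · have := Walk.rel_of_mem_map_toProd (r := fun x y => f x y ≤ 0) hres h2; omega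
    · omega
  · simp only [Pi.add_apply, hp.unitFlow_eq] at hxy
    split_ifs at hxy with h1 h2
    · exact Walk.rel_of_mem_map_toProd (fun d _ => d.adj) h1
    · exact (Walk.rel_of_mem_map_toProd (fun d _ => d.adj) h2).symm
    · exact hf.adj x y (by simpa using hxy)
  · simp [sum_add_distrib, p.sum_unitFlow, hf.conserve w hws hwt, hws, hwt]

theorem sub_unitFlow_apply (hf : IsUnitFlow G s t f) {p : G.Walk s t} (hp : p.IsPath)
    (hsat : ∀ d ∈ p.darts, f d.fst d.snd = 1) (x y : V) :
    (f - p.unitFlow) x y = if s(x, y) ∈ p.edges then 0 else f x y := by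
  have hxy := Walk.rel_of_mem_map_toProd (r := fun x y => f x y = 1) (x := x) (y := y) hsat
  have hyx := Walk.rel_of_mem_map_toProd (r := fun x y => f x y = 1) (x := y) (y := x) hsat
  have := hf.swap x y
  simp only [Pi.sub_apply, hp.unitFlow_eq, p.mk_mem_edges_iff]
  split_ifs <;> grind

theorem sub_unitFlow (hf : IsUnitFlow G s t f) {p : G.Walk s t} (hp : p.IsPath)
    (hsat : ∀ d ∈ p.darts, f d.fst d.snd = 1) : IsUnitFlow G s t (f - p.unitFlow) := by
  refine ⟨fun x y => ?_, fun x y => ?_, fun x y hxy => ?_, fun w hws hwt => ?_⟩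
  · simp [hf.swap x y, p.unitFlow_swap x y]; ring
  · rw [hf.sub_unitFlow_apply hp hsat]
    split_ifs
    exacts [zero_le_one, hf.le_one x y]
  · rw [hf.sub_unitFlow_apply hp hsat] at hxy
    split_ifs at hxy
    exacts [absurd rfl hxy, hf.adj x y hxy]
  · simp [sum_sub_distrib, p.sum_unitFlow, hf.conserve w hws hwt, hws, hwt]

theorem exists_cut_of_saturated (hf : IsUnitFlow G s t f) {S : Finset V} (hs : s ∈ S)
    (ht : t ∉ S) (hsat : ∀ x ∈ S, ∀ y ∉ S, G.Adj x y → f x y = 1) :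
    ∃ F, CutsBetween G s t F ∧ (F.card : ℤ) = ∑ y, f s y := by
  classical
  set A := (S ×ˢ Sᶜ).filter fun e => G.Adj e.1 e.2
  refine ⟨A.image fun e => s(e.1, e.2), ⟨?_, ?_⟩, ?_⟩
  · intro e he
    obtain ⟨⟨x, y⟩, hxy, rfl⟩ := mem_image.mp he
    exact (mem_filter.mp hxy).2
  · rintro ⟨p⟩
    obtain ⟨d, -, hd₁, hd₂⟩ := p.exists_boundary_dart S hs ht
    have hd := d.adj
    rw [deleteEdges_adj] at hd
    refine hd.2 (mem_image_of_mem _ (mem_filter.mpr ⟨?_, hd.1⟩))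
    exact mem_product.mpr ⟨hd₁, mem_compl.mpr hd₂⟩
  · have hinj : Set.InjOn (fun e : V × V => s(e.1, e.2)) A := by
      rintro ⟨x, y⟩ hxy ⟨x', y'⟩ hxy' h
      simp only [A, coe_filter, mem_product, mem_compl] at hxy hxy'
      rcases Sym2.eq_iff.mp h with ⟨rfl, rfl⟩ | ⟨rfl, rfl⟩
      · rfl
      · exact absurd hxy.1.1 hxy'.1.2
    rw [card_image_of_injOn hinj, natCast_card_filter, hf.sum_eq_sum_compl hs ht, ← sum_product']
    refine sum_congr rfl fun ⟨x, y⟩ hxy => ?_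
    rw [mem_product, mem_compl] at hxy
    split_ifs with hadj
    · exact (hsat x hxy.1 y hxy.2 hadj).symm
    · exact (not_imp_comm.mp (hf.adj x y) hadj).symm

theorem reflTransGen_of_sum_pos (hf : IsUnitFlow G s t f) (hpos : 0 < ∑ y, f s y) :
    Relation.ReflTransGen (fun x y => f x y = 1) s t := by
  classical
  by_contra ht
  set S := univ.filter (Relation.ReflTransGen (fun x y => f x y = 1) s)
  have hcross : ∑ x ∈ S, ∑ y ∈ Sᶜ, f x y ≤ 0 := by
    refine sum_nonpos fun x hx => sum_nonpos fun y hy => ?_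
    have hxy : f x y ≠ 1 := fun h =>
      mem_compl.mp hy (mem_filter.mpr ⟨mem_univ y, (mem_filter.mp hx).2.tail h⟩)
    have := hf.le_one x y
    omega
  have := hf.sum_eq_sum_compl (S := S) (mem_filter.mpr ⟨mem_univ s, .refl⟩)
    fun h => ht (mem_filter.mp h).2
  omega

theorem exists_cut_of_forall_le (hf : IsUnitFlow G s t f) (hst : s ≠ t)
    (hmax : ∀ g, IsUnitFlow G s t g → ∑ y, g s y ≤ ∑ y, f s y) :
    ∃ F, CutsBetween G s t F ∧ (F.card : ℤ) = ∑ y, f s y := by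
  classical
  set S := univ.filter (Relation.ReflTransGen (fun x y => G.Adj x y ∧ f x y ≤ 0) s)
  have ht : t ∉ S := by
    intro ht
    obtain ⟨p, hp, hres⟩ :=
      exists_isPath_of_reflTransGen (fun x y h => h.1) (mem_filter.mp ht).2
    have := hmax _ (hf.add_unitFlow hp fun d hd => (hres d hd).2)
    simp [sum_add_distrib, p.sum_unitFlow, hst] at this
  refine hf.exists_cut_of_saturated (mem_filter.mpr ⟨mem_univ s, .refl⟩) ht
    fun x hx y hy hxy => ?_
  have hres : ¬ f x y ≤ 0 := fun h =>
    hy (mem_filter.mpr ⟨mem_univ y, (mem_filter.mp hx).2.tail ⟨hxy, h⟩⟩)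
  have := hf.le_one x y
  omega

theorem exists_edgeDisjoint_paths (hf : IsUnitFlow G s t f) (hst : s ≠ t) (n : ℕ)
    (hn : ∑ y, f s y = n) :
    ∃ P : Fin n → G.Path s t,
      (Pairwise fun i j => ∀ e ∈ (P i).1.edges, e ∉ (P j).1.edges) ∧
      ∀ i x y, s(x, y) ∈ (P i).1.edges → f x y ≠ 0 := by
  induction n generalizing f with
  | zero => exact ⟨Fin.elim0, fun i => i.elim0, fun i => i.elim0⟩
  | succ n ih =>
    obtain ⟨p, hp, hsat⟩ := exists_isPath_of_reflTransGen (fun x y h => hf.adj x y (by omega))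
      (hf.reflTransGen_of_sum_pos (by omega))
    have happly := hf.sub_unitFlow_apply hp hsat
    obtain ⟨P, hdisj, hsupp⟩ := ih (hf.sub_unitFlow hp hsat)
      (by simp [sum_sub_distrib, p.sum_unitFlow, hst, hn])
    have hp_supp : ∀ x y, s(x, y) ∈ p.edges → f x y ≠ 0 := by
      intro x y hxy
      have h := happly x y
      rw [if_pos hxy, Pi.sub_apply, Pi.sub_apply, sub_eq_zero] at h
      exact h ▸ hp.unitFlow_ne_zero_iff.mpr hxy
    have hnot : ∀ j, ∀ e ∈ p.edges, e ∉ (P j).1.edges := by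
      intro j e
      induction e using Sym2.ind with
      | _ x y => exact fun hep hePj => hsupp j x y hePj (by rw [happly, if_pos hep])
    refine ⟨Fin.cons ⟨p, hp⟩ P, pairwise_fin_succ_iff.mpr ⟨?_, ?_, ?_⟩, ?_⟩
    · exact fun i e hei hep => hnot i e hep hei
    · exact hnot
    · exact fun i j hij => hdisj hij
    · intro i
      cases i using Fin.cases with
      | zero => exact hp_supp
      | succ i =>
        intro x y hxy h
        exact hsupp i x y hxy (by rw [happly]; split_ifs <;> simp [h])

end IsUnitFlow

end Flow

end SimpleGraph

theorem stmt18 {V : Type*} [Fintype V] (G : SimpleGraph V) (u v : V) (huv : u ≠ v) :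
    lam G u v = sSup {n | ∃ P : Fin n → G.Path u v,
      ∀ i j, i ≠ j → ∀ e ∈ (P i).1.edges, e ∉ (P j).1.edges} := by
  classical
  obtain ⟨f, hf, hmax⟩ := exists_isUnitFlow_forall_le G u v
  obtain ⟨F, hF, hFf⟩ := hf.exists_cut_of_forall_le huv hmax
  obtain ⟨P, hP, -⟩ := hf.exists_edgeDisjoint_paths huv F.card hFf.symm
  have hlam : lam G u v = F.card := by
    obtain ⟨F', hF', hF'card⟩ :=
      Nat.sInf_mem (s := {n | ∃ F, CutsBetween G u v F ∧ F.card = n}) ⟨F.card, F, hF, rfl⟩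
    refine le_antisymm (Nat.sInf_le ⟨F, hF, rfl⟩) ?_
    exact (card_le_card_of_edgeDisjoint P (fun i j hij => hP hij) hF'.2).trans_eq hF'card
  rw [hlam, eq_comm]
  refine IsGreatest.csSup_eq ⟨⟨P, fun i j hij => hP hij⟩, ?_⟩
  rintro n ⟨Q, hQ⟩
  exact card_le_card_of_edgeDisjoint Q hQ hF.2
end
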